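/- arXiv:1804.01868 — 2 statements merged into one kernel-verified Lean document; each statement's English description precedes it below -/
import Mathlib

section
/- For all positive integers n and k: ∑_{m=0}^{min(n,k)} (m!)² S(n+1,m+1) S(k+1,m+1) = ∑_{j=0}^{k} A(k,j) ∑_{m=0}^{k+2-j} C(k+2-j, m) · (m+j-1)! · S(n, m+j-1). -/
/-- Stirling numbers of the second kind: `stirling n r` is the number of
partitions of an `n`-element set into `r` non-empty blocks. -/
def stirling : ℕ → ℕ → ℕ
  | 0, 0 => 1
  | 0, _ + 1 => 0
  | _ + 1, 0 => 0
  | n + 1, r + 1 => (r + 1) * stirling n (r + 1) + stirling n r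
/-- The descent set of a permutation of `Fin k`: positions `i` (with `i+1 < k`)
such that `π i > π (i+1)`. -/
def descentSet (k : ℕ) (π : Equiv.Perm (Fin k)) : Finset (Fin (k - 1)) :=
  Finset.univ.filter fun i =>
    π ⟨i.1 + 1, by have := i.isLt; omega⟩ < π ⟨i.1, by have := i.isLt; omega⟩

/-- The Eulerian number `eulerian k j` counts permutations of `{1,…,k}`
with exactly `j - 1` descents (equivalently, `j` ascending runs). -/
def eulerian (k j : ℕ) : ℕ :=
  (Finset.univ.filter fun π : Equiv.Perm (Fin k) =>
    (descentSet k π).card + 1 = j).card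

/-
Write `g r = r! S(n,r)` and `P_k(x) = ∑ m! S(k,m) x^m`. Frobenius' formula
`P_k(x) = ∑_j A(k,j) x^j (1+x)^(k-j)` turns the right-hand side, once collected by `r = m + j - 1`,
into `∑_r g r [x^(r+1)] (1+x)² P_k(x)`. On the left, the recurrence
`S(N+1,m+1) = (m+1) S(N,m+1) + S(N,m)` gives `m! S(n+1,m+1) = g m + g (m+1)` and
`m! S(k+1,m+1) = [x^(m+1)] (1+x) P_k(x)`, and one summation by parts moves the factor `1 + x`
from the `g`'s to `P_k`.

Frobenius' formula follows by induction on `k` from `A(k+1,j) = j A(k,j) + (k+2-j) A(k,j-1)`,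
which counts the ways to insert the new largest letter into a permutation: in the one-line word
padded by `0` at both ends, insertion into a gap after a descent keeps the number of descents and
insertion after an ascent raises it by one.
-/

open Finset
open scoped Nat

theorem sum_range_add_succ_mul {R : Type*} [NonUnitalNonAssocSemiring R] (g h : ℕ → R) (N : ℕ) :
    ∑ r ∈ range N, (g r + g (r + 1)) * h (r + 1) + g 0 * h 0 =
      ∑ r ∈ range N, g r * (h r + h (r + 1)) + g N * h N := by
  have hshift := (sum_range_succ' (fun r => g r * h r) N).symm.trans (sum_range_succ _ N)
  simp only [add_mul, mul_add, sum_add_distrib, add_assoc, hshift]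
  abel

theorem mul_choose_add_succ_mul_choose (a b j : ℕ) :
    j * (a + 1).choose (b + 1) + (a + 1) * a.choose b = (j + b + 1) * (a + 1).choose (b + 1) := by
  rw [Nat.add_one_mul_choose_eq]
  ring

section Stirling

theorem stirling_succ_zero (n : ℕ) : stirling (n + 1) 0 = 0 := rfl

theorem stirling_eq_zero_of_lt : ∀ {n r : ℕ}, n < r → stirling n r = 0
  | 0, _ + 1, _ => rfl
  | n + 1, r + 1, h => by
    simp [stirling, stirling_eq_zero_of_lt (by omega : n < r + 1),
      stirling_eq_zero_of_lt (by omega : n < r)]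

theorem factorial_mul_stirling_succ_succ (n r : ℕ) :
    r ! * stirling (n + 1) (r + 1) = r ! * stirling n r + (r + 1)! * stirling n (r + 1) := by
  rw [stirling, Nat.factorial_succ]
  ring

end Stirling

section Words

variable {α : Type*}

def insertAt (u : ℕ → α) (q : ℕ) (x : α) : ℕ → α :=
  fun i => if i ≤ q then u i else if i = q + 1 then x else u (i - 1)

theorem insertAt_of_le {u : ℕ → α} {q i : ℕ} (x : α) (h : i ≤ q) : insertAt u q x i = u i :=
  if_pos h

theorem insertAt_of_lt {u : ℕ → α} {q i : ℕ} (x : α) (h : q + 1 < i) :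
    insertAt u q x i = u (i - 1) := by
  rw [insertAt, if_neg (by omega), if_neg (by omega)]

theorem insertAt_succ (u : ℕ → α) (q : ℕ) (x : α) : insertAt u q x (q + 1) = x := by
  simp [insertAt]

variable [LinearOrder α]

def wordDescents (u : ℕ → α) (L : ℕ) : Finset ℕ :=
  {i ∈ range L | u (i + 1) < u i}

theorem mem_wordDescents {u : ℕ → α} {L i : ℕ} :
    i ∈ wordDescents u L ↔ i < L ∧ u (i + 1) < u i := by
  simp [wordDescents]

theorem wordDescents_subset_range (u : ℕ → α) (L : ℕ) : wordDescents u L ⊆ range L :=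
  filter_subset _ _

theorem card_wordDescents_succ (u : ℕ → α) (L : ℕ) :
    #(wordDescents u (L + 1)) = #(wordDescents u L) + if u (L + 1) < u L then 1 else 0 := by
  simp only [wordDescents, range_add_one, filter_insert]
  split_ifs
  · rw [card_insert_of_notMem (by simp)]
  · rfl

theorem wordDescents_congr {u v : ℕ → α} {L : ℕ} (h : ∀ i ≤ L, u i = v i) :
    wordDescents u L = wordDescents v L :=
  filter_congr fun i hi => by
    rw [mem_range] at hi
    rw [h i hi.le, h (i + 1) hi]

theorem card_wordDescents_insertAt {u : ℕ → α} {q L : ℕ} {x : α} (hq : q < L)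
    (hxq : u q < x) (hxq' : u (q + 1) < x) :
    #(wordDescents (insertAt u q x) (L + 1)) =
      #(wordDescents u L) + if q ∈ wordDescents u L then 0 else 1 := by
  induction L, hq using Nat.le_induction with
  | base =>
    have hprefix : wordDescents (insertAt u q x) q = wordDescents u q :=
      wordDescents_congr fun i hi => insertAt_of_le x hi
    rw [card_wordDescents_succ, card_wordDescents_succ, hprefix, card_wordDescents_succ,
      insertAt_succ, insertAt_of_le x le_rfl, insertAt_of_lt x (by omega : q + 1 < q + 1 + 1),
      Nat.add_sub_cancel, if_neg (not_lt_of_gt hxq), if_pos hxq']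
    by_cases hd : u (q + 1) < u q <;> simp [mem_wordDescents, hd]
  | succ L hL ih =>
    have hmem : q ∈ wordDescents u (L + 1) ↔ q ∈ wordDescents u L := by
      simp only [mem_wordDescents]
      exact and_congr_left fun _ => by omega
    rw [card_wordDescents_succ, ih, card_wordDescents_succ u L, insertAt_of_lt x (by omega),
      insertAt_of_lt x (by omega), Nat.add_sub_cancel, Nat.add_sub_cancel]
    simp only [hmem]
    omega

theorem card_filter_card_wordDescents_insertAt {u : ℕ → α} {L j : ℕ} {x : α}
    (hx : ∀ i ≤ L, u i < x) :
    #{q ∈ range L | #(wordDescents (insertAt u q x) (L + 1)) = j} =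
      (if #(wordDescents u L) = j then j else 0) +
        if #(wordDescents u L) + 1 = j then L + 1 - j else 0 := by
  have hcount (q : ℕ) (hq : q ∈ range L) : #(wordDescents (insertAt u q x) (L + 1)) =
      #(wordDescents u L) + if q ∈ wordDescents u L then 0 else 1 := by
    rw [mem_range] at hq
    exact card_wordDescents_insertAt hq (hx q hq.le) (hx (q + 1) hq)
  rw [filter_congr fun q hq => by rw [hcount q hq]]
  split_ifs with h₁ h₂
  · omega
  · rw [filter_congr (q := (· ∈ wordDescents u L)) fun q _ => by
        by_cases q ∈ wordDescents u L <;> simp [*],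
      filter_mem_eq_inter, inter_eq_right.2 (wordDescents_subset_range u L)]
    omega
  · rw [filter_congr (q := (· ∉ wordDescents u L)) fun q _ => by
        by_cases q ∈ wordDescents u L <;> simp [*],
      filter_notMem_eq_sdiff, card_sdiff_of_subset (wordDescents_subset_range u L), card_range]
    omega
  · rw [filter_false_of_mem fun q _ => by split_ifs <;> omega]
    rfl

end Words

section PermWord

variable {k : ℕ}

/-- The one-line notation of `π`, shifted to the values `1, …, k` and padded by `0` on both sides.
For `k ≥ 1` the trailing `0` adds one descent, so `eulerian k j` counts the `π` whose word has
`j` descents. -/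
def permWord (π : Equiv.Perm (Fin k)) (i : ℕ) : ℕ :=
  if h : 0 < i ∧ i ≤ k then π ⟨i - 1, by omega⟩ + 1 else 0

theorem permWord_lt (π : Equiv.Perm (Fin k)) (i : ℕ) : permWord π i < k + 1 := by
  unfold permWord
  split_ifs
  · simp
  · omega

theorem card_wordDescents_permWord (π : Equiv.Perm (Fin (k + 1))) :
    #(wordDescents (permWord π) (k + 2)) = #(descentSet (k + 1) π) + 1 := by
  have hinner : #(wordDescents (permWord π) (k + 1)) = #(descentSet (k + 1) π) := by
    rw [wordDescents, descentSet, card_filter, card_filter, sum_range_succ',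
      if_neg (by simp [permWord]), add_zero, ← Fin.sum_univ_eq_sum_range]
    refine sum_congr rfl fun i _ => ?_
    have hi := i.isLt
    simp only [permWord, dif_pos (show 0 < (i : ℕ) + 1 + 1 ∧ (i : ℕ) + 1 + 1 ≤ k + 1 by omega),
      dif_pos (show 0 < (i : ℕ) + 1 ∧ (i : ℕ) + 1 ≤ k + 1 by omega), add_lt_add_iff_right,
      Fin.val_fin_lt]
    rfl
  have hlast : permWord π (k + 2) < permWord π (k + 1) := by
    simp [permWord]
  rw [card_wordDescents_succ, hinner, if_pos hlast]

end PermWord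

section InsertMax

variable {n : ℕ}

theorem insertNth_last_injective (τ : Equiv.Perm (Fin (n + 1))) (p : Fin (n + 2)) :
    Function.Injective (Fin.insertNth p (Fin.last (n + 1)) (Fin.castSucc ∘ τ)) := by
  intro a b hab
  induction a using Fin.succAboveCases p with
  | x =>
    induction b using Fin.succAboveCases p with
    | x => rfl
    | p b => simp [eq_comm (a := Fin.last _)] at hab
  | p a =>
    induction b using Fin.succAboveCases p with
    | x => simp at hab
    | p b => simpa using hab

noncomputable def insertMax (τ : Equiv.Perm (Fin (n + 1))) (p : Fin (n + 2)) :
    Equiv.Perm (Fin (n + 2)) :=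
  Equiv.ofBijective _ (Finite.injective_iff_bijective.1 (insertNth_last_injective τ p))

theorem insertMax_apply_self (τ : Equiv.Perm (Fin (n + 1))) (p : Fin (n + 2)) :
    insertMax τ p p = Fin.last (n + 1) := by
  simp [insertMax]

theorem insertMax_apply_succAbove (τ : Equiv.Perm (Fin (n + 1))) (p : Fin (n + 2))
    (m : Fin (n + 1)) : insertMax τ p (p.succAbove m) = (τ m).castSucc := by
  simp [insertMax]

theorem insertMax_injective :
    Function.Injective fun x : Equiv.Perm (Fin (n + 1)) × Fin (n + 2) => insertMax x.1 x.2 := by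
  rintro ⟨τ, p⟩ ⟨σ, q⟩ h
  obtain rfl : p = q := by
    by_contra hne
    obtain ⟨m, rfl⟩ := Fin.exists_succAbove_eq hne
    simpa [insertMax_apply_self, insertMax_apply_succAbove, eq_comm (a := Fin.last _)]
      using DFunLike.congr_fun h (q.succAbove m)
  obtain rfl : τ = σ := Equiv.ext fun m => by
    simpa [insertMax_apply_succAbove] using DFunLike.congr_fun h (p.succAbove m)
  rfl

theorem insertMax_bijective :
    Function.Bijective fun x : Equiv.Perm (Fin (n + 1)) × Fin (n + 2) => insertMax x.1 x.2 := by
  refine (Fintype.bijective_iff_injective_and_card _).2 ⟨insertMax_injective, ?_⟩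
  simp only [Fintype.card_prod, Fintype.card_perm, Fintype.card_fin, Nat.factorial_succ (n + 1)]
  ring

theorem permWord_insertMax (τ : Equiv.Perm (Fin (n + 1))) (p : Fin (n + 2)) :
    permWord (insertMax τ p) = insertAt (permWord τ) p (n + 2) := by
  funext i
  have hp := p.isLt
  rcases Nat.lt_or_ge (p + 1 : ℕ) i with hpi | hip
  · rw [insertAt_of_lt _ hpi]
    simp only [permWord]
    by_cases hi : i ≤ n + 2
    · have hj : (⟨i - 1, by omega⟩ : Fin (n + 2)) = p.succAbove ⟨i - 2, by omega⟩ := by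
        rw [Fin.succAbove_of_le_castSucc _ _ (by rw [Fin.le_def]; simp; omega)]
        ext; simp; omega
      rw [dif_pos (by omega), dif_pos (by omega), hj, insertMax_apply_succAbove]
      rfl
    · rw [dif_neg (by omega), dif_neg (by omega)]
  · rcases Nat.lt_or_ge (p : ℕ) i with hpi' | hpi'
    · obtain rfl : i = p + 1 := by omega
      rw [insertAt_succ, permWord, dif_pos (by omega)]
      simp [insertMax_apply_self]
    rw [insertAt_of_le _ hpi']
    simp only [permWord]
    by_cases hi : 0 < i
    · have hj : (⟨i - 1, by omega⟩ : Fin (n + 2)) = p.succAbove ⟨i - 1, by omega⟩ := by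
        rw [Fin.succAbove_of_castSucc_lt _ _ (by rw [Fin.lt_def]; simp; omega)]
        rfl
      rw [dif_pos (by omega), dif_pos (by omega), hj, insertMax_apply_succAbove]
      rfl
    · rw [dif_neg (by omega), dif_neg (by omega)]

theorem card_filter_card_wordDescents_insertMax (τ : Equiv.Perm (Fin (n + 1))) (j : ℕ) :
    #{p : Fin (n + 2) | #(wordDescents (permWord (insertMax τ p)) (n + 3)) = j} =
      (if #(wordDescents (permWord τ) (n + 2)) = j then j else 0) +
        if #(wordDescents (permWord τ) (n + 2)) + 1 = j then n + 3 - j else 0 := by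
  simp only [permWord_insertMax, card_filter]
  rw [Fin.sum_univ_eq_sum_range
    (fun q => if #(wordDescents (insertAt (permWord τ) q (n + 2)) (n + 3)) = j then 1 else 0),
    ← card_filter]
  exact card_filter_card_wordDescents_insertAt fun i _ => permWord_lt τ i

end InsertMax

section Eulerian

theorem eulerian_zero_right (k : ℕ) : eulerian k 0 = 0 := by
  simp [eulerian]

theorem eulerian_eq_zero_of_lt {k j : ℕ} (hk : 0 < k) (h : k < j) : eulerian k j = 0 := by
  refine card_eq_zero.2 (filter_false_of_mem fun π _ => ?_)
  have := (card_le_univ (descentSet k π)).trans_eq (Fintype.card_fin _)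
  omega

theorem eulerian_one (j : ℕ) : eulerian 1 j = if j = 1 then 1 else 0 := by
  simp [eulerian, descentSet, eq_comm]
  split_ifs <;> rfl

theorem eulerian_succ_eq_card (n j : ℕ) :
    eulerian (n + 1) j =
      #{π : Equiv.Perm (Fin (n + 1)) | #(wordDescents (permWord π) (n + 2)) = j} := by
  simp only [eulerian, card_wordDescents_permWord]

theorem eulerian_succ_succ (n j : ℕ) :
    eulerian (n + 2) j = j * eulerian (n + 1) j + (n + 3 - j) * eulerian (n + 1) (j - 1) := by
  have hshift :
      #{π : Equiv.Perm (Fin (n + 1)) | #(wordDescents (permWord π) (n + 2)) + 1 = j} =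
        eulerian (n + 1) (j - 1) := by
    rw [eulerian_succ_eq_card]
    congr 1
    exact filter_congr fun π _ => by rw [card_wordDescents_permWord]; omega
  rw [eulerian_succ_eq_card, card_filter, ← insertMax_bijective.sum_comp
    (fun π => if #(wordDescents (permWord π) (n + 3)) = j then 1 else 0), Fintype.sum_prod_type]
  simp only [← card_filter]
  simp only [card_filter_card_wordDescents_insertMax, sum_add_distrib, sum_ite, sum_const,
    smul_eq_mul, hshift, eulerian_succ_eq_card]
  ring

end Eulerian

section EulerianChooseSum

/-- The coefficient of `x ^ s` in `∑ j, A(k,j) x ^ j (1 + x) ^ (k + t - j)`. For `t = 0` this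
polynomial is `∑ m, m! S(k,m) x ^ m` (Frobenius' formula, `eulerianChooseSum_zero`). -/
def eulerianChooseSum (k t s : ℕ) : ℕ :=
  ∑ j ∈ range (s + 1), eulerian k j * (k + t - j).choose (s - j)

theorem eulerianChooseSum_zero_right (k t : ℕ) : eulerianChooseSum k t 0 = 0 := by
  simp [eulerianChooseSum, eulerian_zero_right]

variable {k : ℕ}

theorem eulerianChooseSum_succ_succ (hk : 0 < k) (t s : ℕ) :
    eulerianChooseSum k (t + 1) (s + 1) =
      eulerianChooseSum k t s + eulerianChooseSum k t (s + 1) := by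
  simp only [eulerianChooseSum, sum_range_succ _ (s + 1), Nat.sub_self, Nat.choose_zero_right,
    ← add_assoc, ← sum_add_distrib]
  congr 1
  refine sum_congr rfl fun j hj => ?_
  rcases Nat.lt_or_ge (k + t) j with hj' | hj'
  · simp [eulerian_eq_zero_of_lt hk (by omega : k < j)]
  · rw [mem_range] at hj
    rw [show k + t + 1 - j = k + t - j + 1 by omega, show s + 1 - j = s - j + 1 by omega,
      Nat.choose_succ_succ]
    ring

theorem eulerianChooseSum_succ_zero (hk : 0 < k) (s : ℕ) :
    eulerianChooseSum (k + 1) 0 s = s * eulerianChooseSum k 1 s := by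
  obtain ⟨n, rfl⟩ : ∃ n, k = n + 1 := ⟨k - 1, by omega⟩
  cases s with
  | zero => simp [eulerianChooseSum_zero_right]
  | succ s =>
    have hshift : ∑ j ∈ range (s + 2), (n + 3 - j) * eulerian (n + 1) (j - 1) *
          (n + 2 - j).choose (s + 1 - j) =
        ∑ j ∈ range (s + 1), (n + 2 - j) * eulerian (n + 1) j * (n + 1 - j).choose (s - j) := by
      rw [sum_range_succ']
      simp [eulerian_zero_right]
    simp only [eulerianChooseSum, eulerian_succ_succ, add_mul (_ * _), sum_add_distrib,
      show n + 1 + 1 = n + 2 from rfl, hshift]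
    rw [mul_sum, sum_range_succ, sum_range_succ _ (s + 1), add_right_comm, ← sum_add_distrib]
    congr 1
    · refine sum_congr rfl fun j hj => ?_
      rcases Nat.lt_or_ge (n + 1) j with hj' | hj'
      · simp [eulerian_eq_zero_of_lt (Nat.succ_pos n) hj']
      rw [mem_range] at hj
      rw [show n + 2 - j = n + 1 - j + 1 by omega, show s + 1 - j = s - j + 1 by omega,
        show s + 1 = j + (s - j) + 1 by omega]
      linear_combination eulerian (n + 1) j * mul_choose_add_succ_mul_choose (n + 1 - j) (s - j) j
    · simp

theorem eulerianChooseSum_zero (hk : 0 < k) (s : ℕ) :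
    eulerianChooseSum k 0 s = s ! * stirling k s := by
  induction k, hk using Nat.le_induction generalizing s with
  | base =>
    rcases s with _ | _ | s
    · rfl
    · rfl
    · simp [eulerianChooseSum, eulerian_one, stirling_eq_zero_of_lt (show 1 < s + 2 by omega)]
  | succ k hk ih =>
    cases s with
    | zero => simp [eulerianChooseSum_zero_right, stirling_succ_zero]
    | succ s =>
      rw [eulerianChooseSum_succ_zero hk, eulerianChooseSum_succ_succ hk, ih, ih,
        ← factorial_mul_stirling_succ_succ, Nat.factorial_succ, mul_assoc]

theorem eulerianChooseSum_one (hk : 0 < k) (s : ℕ) :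
    eulerianChooseSum k 1 (s + 1) = s ! * stirling (k + 1) (s + 1) := by
  rw [eulerianChooseSum_succ_succ hk, eulerianChooseSum_zero hk, eulerianChooseSum_zero hk,
    factorial_mul_stirling_succ_succ]

theorem sum_eulerian_mul_sum_choose (hk : 0 < k) (g : ℕ → ℕ) :
    ∑ j ∈ range (k + 1), eulerian k j *
        ∑ i ∈ range (k + 2 - j + 1), (k + 2 - j).choose i * g (i + j - 1) =
      ∑ r ∈ range (k + 2), g r * eulerianChooseSum k 2 (r + 1) := by
  have hextend : ∑ j ∈ range (k + 1), eulerian k j *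
        ∑ i ∈ range (k + 2 - j + 1), (k + 2 - j).choose i * g (i + j - 1) =
      ∑ j ∈ range (k + 3), ∑ i ∈ range (k + 3 - j),
        eulerian k j * (k + 2 - j).choose i * g (i + j - 1) := by
    rw [sum_range_succ _ (k + 2), sum_range_succ _ (k + 1), eulerian_eq_zero_of_lt hk (by omega),
      eulerian_eq_zero_of_lt hk (by omega)]
    simp only [zero_mul, sum_const_zero, add_zero, mul_sum, mul_assoc]
    refine sum_congr rfl fun j hj => ?_
    rw [show k + 2 - j + 1 = k + 3 - j by simp at hj; omega]
  rw [hextend, ← sum_range_diag_flip, sum_range_succ']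
  simp only [eulerianChooseSum, mul_sum, zero_add, sum_range_one, eulerian_zero_right, zero_mul,
    add_zero]
  refine sum_congr rfl fun r _ => sum_congr rfl fun j hj => ?_
  rw [show r + 1 - j + j - 1 = r by simp at hj; omega]
  ring

end EulerianChooseSum

theorem polyBernoulli_eq_eulerian_stirling_general (n k : ℕ) (hk : 0 < k) :
    (∑ m ∈ Finset.range (min n k + 1),
        (Nat.factorial m) ^ 2 * stirling (n + 1) (m + 1) * stirling (k + 1) (m + 1)) =
      ∑ j ∈ Finset.range (k + 1), eulerian k j *
        ∑ m ∈ Finset.range (k + 2 - j + 1),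
          Nat.choose (k + 2 - j) m * Nat.factorial (m + j - 1) * stirling n (m + j - 1) := by
  set g : ℕ → ℕ := fun r => r ! * stirling n r
  have hvanish : ∀ m ∈ range (k + 2), m ∉ range (min n k + 1) →
      m ! ^ 2 * stirling (n + 1) (m + 1) * stirling (k + 1) (m + 1) = 0 := by
    intro m hm hm'
    simp only [mem_range] at hm hm'
    rcases Nat.lt_or_ge n m with hnm | hmn
    · rw [stirling_eq_zero_of_lt (by omega : n + 1 < m + 1), mul_zero, zero_mul]
    · rw [stirling_eq_zero_of_lt (by omega : k + 1 < m + 1), mul_zero]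
  have hlast : eulerianChooseSum k 1 (k + 2) = 0 := by
    rw [eulerianChooseSum_one hk, stirling_eq_zero_of_lt (by omega), mul_zero]
  have hparts := sum_range_add_succ_mul g (eulerianChooseSum k 1) (k + 2)
  rw [eulerianChooseSum_zero_right, hlast, mul_zero, mul_zero, add_zero, add_zero] at hparts
  calc _ = ∑ m ∈ range (k + 2), m ! * stirling (n + 1) (m + 1) * eulerianChooseSum k 1 (m + 1) := by
        rw [sum_subset (range_subset_range.2 (by omega)) hvanish]
        refine sum_congr rfl fun m _ => ?_
        rw [eulerianChooseSum_one hk]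
        ring
    _ = ∑ m ∈ range (k + 2), (g m + g (m + 1)) * eulerianChooseSum k 1 (m + 1) := by
        simp only [g, factorial_mul_stirling_succ_succ]
    _ = ∑ r ∈ range (k + 2), g r * eulerianChooseSum k 2 (r + 1) := by
        rw [hparts]
        exact sum_congr rfl fun r _ => by rw [← eulerianChooseSum_succ_succ hk 1 r]
    _ = _ := by
        rw [← sum_eulerian_mul_sum_choose hk]
        simp only [g, mul_assoc]

theorem polyBernoulli_eq_eulerian_stirling (n k : ℕ) (hn : 0 < n) (hk : 0 < k) :
    (∑ m ∈ Finset.range (min n k + 1),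
        (Nat.factorial m) ^ 2 * stirling (n + 1) (m + 1) * stirling (k + 1) (m + 1)) =
      ∑ j ∈ Finset.range (k + 1), eulerian k j *
        ∑ m ∈ Finset.range (k + 2 - j + 1),
          Nat.choose (k + 2 - j) m * Nat.factorial (m + j - 1) * stirling n (m + j - 1) :=
  polyBernoulli_eq_eulerian_stirling_general n k hk
end

section
/- For all positive integers n and k with n, k ≥ 1: ∑_{m=0}^{n} (-1)^{n+m} m! S(n,m) (m+1)^k = ∑_{m=0}^{k} (-1)^{k+m} m! S(k,m) (m+1)^n, i.e., the inclusion-exclusion formula for poly-Bernoulli numbers is symmetric in n and k. -/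
/-! Put `L_n g = ∑ₘ (-1)^(n+m) m! S(n,m) g(m)`, a linear functional on sequences. The recurrence
of `S` makes `L_{n+1} g = L_n (m ↦ (m+1) g(m+1) - m g(m))`, and Pascal's rule then yields
`L_n (m ↦ C(m,j)) = j! S(n+1,j+1)`. Since `(m+1)^k = ∑ⱼ j! S(k+1,j+1) C(m,j)`, both sides of the
theorem equal `∑ⱼ (j!)² S(n+1,j+1) S(k+1,j+1)`, which is symmetric in `n` and `k`. -/

open Finset Nat

theorem stirling_eq_stirlingSecond : ∀ n r : ℕ, stirling n r = stirlingSecond n r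
  | 0, 0 | 0, _ + 1 | _ + 1, 0 => rfl
  | n + 1, r + 1 => by
    rw [stirling, stirlingSecond_succ_succ, stirling_eq_stirlingSecond n (r + 1),
      stirling_eq_stirlingSecond n r]

variable {R : Type*} [CommRing R]

theorem add_one_mul_descPochhammer_eval (j : ℕ) (x : R) :
    (x + 1) * (descPochhammer R j).eval x =
      (descPochhammer R (j + 1)).eval x + (j + 1) * (descPochhammer R j).eval x := by
  rw [descPochhammer_succ_eval]
  ring

theorem add_one_pow_eq_sum_stirlingSecond_mul_descPochhammer_eval (k : ℕ) (x : R) :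
    (x + 1) ^ k =
      ∑ j ∈ range (k + 1), (stirlingSecond (k + 1) (j + 1) : R) * (descPochhammer R j).eval x := by
  induction k with
  | zero => simp [stirlingSecond_self]
  | succ k ih =>
    set d : ℕ → R := fun j => (descPochhammer R j).eval x
    have hshift : ∑ j ∈ range (k + 2), (stirlingSecond (k + 1) j : R) * d j =
        ∑ j ∈ range (k + 1), (stirlingSecond (k + 1) (j + 1) : R) * d (j + 1) := by
      simp [sum_range_succ' _ (k + 1)]
    have htop : ∑ j ∈ range (k + 2), ((j : R) + 1) * stirlingSecond (k + 1) (j + 1) * d j =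
        ∑ j ∈ range (k + 1), ((j : R) + 1) * stirlingSecond (k + 1) (j + 1) * d j := by
      simp [sum_range_succ _ (k + 1), stirlingSecond_eq_zero_of_lt]
    calc (x + 1) ^ (k + 1)
        = ∑ j ∈ range (k + 1), (stirlingSecond (k + 1) (j + 1) : R) * ((x + 1) * d j) := by
          rw [pow_succ, ih, sum_mul]
          exact sum_congr rfl fun j _ => by ring
      _ = ∑ j ∈ range (k + 2), (((j : R) + 1) * stirlingSecond (k + 1) (j + 1) * d j +
            stirlingSecond (k + 1) j * d j) := by
          rw [sum_add_distrib, hshift, htop, ← sum_add_distrib]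
          exact sum_congr rfl fun j _ => by rw [add_one_mul_descPochhammer_eval]; ring
      _ = ∑ j ∈ range (k + 2), (stirlingSecond (k + 2) (j + 1) : R) * d j := by
          refine sum_congr rfl fun j _ => ?_
          rw [stirlingSecond_succ_succ (k + 1) j]
          push_cast
          ring

variable (R) in
def alternatingStirlingSum (n : ℕ) : (ℕ → R) →ₗ[R] R where
  toFun g := ∑ m ∈ range (n + 1), (-1) ^ (n + m) * (m ! : R) * stirlingSecond n m * g m
  map_add' f g := by simp only [Pi.add_apply, mul_add, sum_add_distrib]
  map_smul' c g := by
    simp only [Pi.smul_apply, smul_eq_mul, RingHom.id_apply, mul_sum]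
    exact sum_congr rfl fun m _ => by ring

theorem alternatingStirlingSum_apply (n : ℕ) (g : ℕ → R) :
    alternatingStirlingSum R n g =
      ∑ m ∈ range (n + 1), (-1) ^ (n + m) * (m ! : R) * stirlingSecond n m * g m := rfl

theorem alternatingStirlingSum_zero (g : ℕ → R) : alternatingStirlingSum R 0 g = g 0 := by
  simp [alternatingStirlingSum_apply]

theorem alternatingStirlingSum_succ (n : ℕ) (g : ℕ → R) :
    alternatingStirlingSum R (n + 1) g =
      alternatingStirlingSum R n fun m => (m + 1) * g (m + 1) - m * g m := by
  set c : ℕ → R := fun m => (-1) ^ (n + m) * (m ! : R) * stirlingSecond n m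
  set h : ℕ → R := fun m => c m * m * g m
  have hshift : ∑ m ∈ range (n + 1), h (m + 1) = ∑ m ∈ range (n + 1), h m := by
    have h0 : h 0 = 0 := by simp [h]
    have hn : h (n + 1) = 0 := by simp [h, c, stirlingSecond_eq_zero_of_lt]
    rw [← add_zero (∑ m ∈ range (n + 1), h (m + 1)), ← h0, ← sum_range_succ', sum_range_succ, hn,
      add_zero]
  calc alternatingStirlingSum R (n + 1) g
      = ∑ m ∈ range (n + 1), (c m * (m + 1) * g (m + 1) - h (m + 1)) := by
        rw [alternatingStirlingSum_apply, sum_range_succ']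
        simp only [stirlingSecond_succ_zero, cast_zero, mul_zero, zero_mul, add_zero]
        refine sum_congr rfl fun m _ => ?_
        simp only [h, c, stirlingSecond_succ_succ, factorial_succ]
        push_cast
        ring
    _ = alternatingStirlingSum R n fun m => (m + 1) * g (m + 1) - m * g m := by
        rw [sum_sub_distrib, hshift, ← sum_sub_distrib, alternatingStirlingSum_apply]
        exact sum_congr rfl fun m _ => by ring

theorem add_one_mul_choose_succ_sub_mul_choose (m j : ℕ) :
    ((m : R) + 1) * (m + 1).choose (j + 1) - m * m.choose (j + 1) =
      (j + 2) * m.choose (j + 1) + (j + 1) * m.choose j := by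
  have hpascal : ((m + 1).choose (j + 1) : R) = m.choose j + m.choose (j + 1) := by
    rw [choose_succ_succ, cast_add]
  have habsorb : ((m : R) + 1) * m.choose j = (m + 1).choose (j + 1) * (j + 1) := by
    exact_mod_cast congrArg (Nat.cast : ℕ → R) (add_one_mul_choose_eq m j)
  linear_combination ((m : R) + j + 2) * hpascal + habsorb

theorem alternatingStirlingSum_choose (n j : ℕ) :
    alternatingStirlingSum R n (fun m => (m.choose j : R)) =
      j ! * stirlingSecond (n + 1) (j + 1) := by
  induction n generalizing j with
  | zero =>
    cases j <;> simp [alternatingStirlingSum_zero, stirlingSecond_self, stirlingSecond_eq_zero_of_lt]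
  | succ n ih =>
    rw [alternatingStirlingSum_succ]
    cases j with
    | zero => simpa [stirlingSecond_one_right] using ih 0
    | succ j =>
      have hrec : (fun m : ℕ => ((m : R) + 1) * (m + 1).choose (j + 1) - m * m.choose (j + 1)) =
          (j + 2 : R) • (fun m : ℕ => (m.choose (j + 1) : R)) +
            (j + 1 : R) • fun m : ℕ => (m.choose j : R) := by
        ext m
        simp [add_one_mul_choose_succ_sub_mul_choose]
      rw [hrec, map_add, map_smul, map_smul, ih, ih, smul_eq_mul, smul_eq_mul,
        stirlingSecond_succ_succ (n + 1) (j + 1)]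
      push_cast [factorial_succ]
      ring

theorem alternatingStirlingSum_add_one_pow (n k : ℕ) :
    alternatingStirlingSum R n (fun m => ((m : R) + 1) ^ k) =
      ∑ j ∈ range (n + k + 1),
        (j ! * stirlingSecond (n + 1) (j + 1) : R) * (j ! * stirlingSecond (k + 1) (j + 1)) := by
  have hexpand : (fun m : ℕ => ((m : R) + 1) ^ k) = ∑ j ∈ range (k + 1),
      ((stirlingSecond (k + 1) (j + 1) * j ! : ℕ) : R) • fun m : ℕ => (m.choose j : R) := by
    ext m
    simp only [add_one_pow_eq_sum_stirlingSecond_mul_descPochhammer_eval, Finset.sum_apply,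
      Pi.smul_apply, smul_eq_mul, descPochhammer_eval_eq_descFactorial,
      descFactorial_eq_factorial_mul_choose]
    push_cast
    exact sum_congr rfl fun j _ => by ring
  rw [hexpand, map_sum, ← sum_subset (range_subset_range.2 (by omega : k + 1 ≤ n + k + 1))]
  · refine sum_congr rfl fun j _ => ?_
    rw [map_smul, alternatingStirlingSum_choose, smul_eq_mul]
    push_cast
    ring
  · intro j _ hj
    rw [mem_range, not_lt] at hj
    simp [stirlingSecond_eq_zero_of_lt (show k + 1 < j + 1 by omega)]

theorem inclusion_exclusion_formula_symmetric_general (n k : ℕ) :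
    (∑ m ∈ Finset.range (n + 1),
        (-1 : ℤ) ^ (n + m) * Nat.factorial m * stirling n m * (m + 1) ^ k) =
      ∑ m ∈ Finset.range (k + 1),
        (-1 : ℤ) ^ (k + m) * Nat.factorial m * stirling k m * (m + 1) ^ n := by
  simp only [stirling_eq_stirlingSecond, ← alternatingStirlingSum_apply,
    alternatingStirlingSum_add_one_pow, add_comm k n]
  exact sum_congr rfl fun j _ => mul_comm _ _

theorem inclusion_exclusion_formula_symmetric (n k : ℕ) (hn : 1 ≤ n) (hk : 1 ≤ k) :
    (∑ m ∈ Finset.range (n + 1),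
        (-1 : ℤ) ^ (n + m) * Nat.factorial m * stirling n m * (m + 1) ^ k) =
      ∑ m ∈ Finset.range (k + 1),
        (-1 : ℤ) ^ (k + m) * Nat.factorial m * stirling k m * (m + 1) ^ n :=
  inclusion_exclusion_formula_symmetric_general n k
end
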